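/- arXiv:2101.10905 — 2 statements merged into one kernel-verified Lean document; each statement's English description precedes it below -/
import Mathlib

section
/- Let $g \geq 1$ urns be given, exactly $d \geq 1$ of which are non-empty, and let $\Delta = \lceil \ln(1/\delta) \rceil + 4$ for a parameter $\delta \in (0,1)$. Consider the process that probes urns uniformly at random until finding a non-empty urn; if the first success is at probe $i \leq g\Delta$, output $Z = i/(g\Delta)$, and otherwise output $Z = 0$. Then $Z \in [0,1]$ and $\frac{1}{d\Delta} - \delta \leq \mathbb{E}[Z] \leq \frac{1}{d\Delta}$. -/
set_option maxHeartbeats 1000000 in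
/-- Truncated urn probing: with `Δ = ⌈ln(1/δ)⌉ + 4`, probes geometric with
`p = d/g`; output `Z = i/(gΔ)` if the first success is at probe `i ≤ gΔ`,
and `Z = 0` otherwise. Then `Z ∈ [0,1]` and
`1/(dΔ) - δ ≤ E[Z] ≤ 1/(dΔ)`. -/
theorem stmt_2 (g d : ℕ) (hg : 1 ≤ g) (hd1 : 1 ≤ d) (hdg : d ≤ g)
    (δ : ℝ) (hδ : δ ∈ Set.Ioo (0 : ℝ) 1)
    (Δ : ℕ) (hΔ : (Δ : ℝ) = ⌈Real.log (1 / δ)⌉ + 4) :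
    (∀ k : ℕ,
      (if k + 1 ≤ g * Δ then ((k + 1 : ℝ) / (g * Δ)) else 0) ∈
        Set.Icc (0 : ℝ) 1) ∧
    (1 / ((d : ℝ) * Δ) - δ ≤
      ∑' k : ℕ, (if k + 1 ≤ g * Δ then ((k + 1 : ℝ) / (g * Δ)) else 0) *
        (1 - (d : ℝ) / g) ^ k * ((d : ℝ) / g)) ∧
    (∑' k : ℕ, (if k + 1 ≤ g * Δ then ((k + 1 : ℝ) / (g * Δ)) else 0) *
        (1 - (d : ℝ) / g) ^ k * ((d : ℝ) / g) ≤ 1 / ((d : ℝ) * Δ)) := by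
  obtain ⟨hδ0, hδ1⟩ := hδ
  have hg0 : (0:ℝ) < g := by exact_mod_cast hg
  have hd0 : (0:ℝ) < d := by exact_mod_cast hd1
  have hdg' : (d:ℝ) ≤ g := by exact_mod_cast hdg
  set p : ℝ := (d:ℝ)/g with hp_def
  clear_value p
  have hp0 : 0 < p := hp_def ▸ div_pos hd0 hg0
  have hp1 : p ≤ 1 := by rw [hp_def, div_le_one hg0]; exact hdg'
  set q : ℝ := 1 - p with hq_def
  clear_value q
  have hq0 : 0 ≤ q := by simp [hq_def]; linarith
  have hq1 : q < 1 := by simp [hq_def]; linarith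
  have hqnorm : ‖q‖ < 1 := by rw [Real.norm_eq_abs, abs_of_nonneg hq0]; exact hq1
  -- Δ bounds
  have hlogpos : 0 < Real.log (1/δ) := Real.log_pos ((one_lt_div hδ0).mpr (by linarith))
  have hceil : (1:ℝ) ≤ (⌈Real.log (1/δ)⌉ : ℝ) := by
    exact_mod_cast Int.ceil_pos.mpr hlogpos
  have hΔ5 : (5:ℝ) ≤ Δ := by rw [hΔ]; linarith
  have hΔlog : Real.log (1/δ) + 4 ≤ (Δ:ℝ) := by
    rw [hΔ]; have := Int.le_ceil (Real.log (1/δ)); linarith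
  set Nr : ℝ := (g:ℝ) * (Δ:ℝ) with hNr_def
  clear_value Nr
  have hNr5 : 5 ≤ Nr := by
    have : (1:ℝ) * 5 ≤ (g:ℝ) * Δ := by
      apply mul_le_mul (by exact_mod_cast hg) hΔ5 (by norm_num) (le_of_lt hg0)
    linarith
  have hNr0 : 0 < Nr := by linarith
  have hpN : p * Nr = (d:ℝ) * Δ := by
    rw [hp_def, hNr_def]; field_simp
  have hdΔ5 : 5 ≤ (d:ℝ) * Δ := by
    calc (5:ℝ) = 1 * 5 := by norm_num
    _ ≤ (d:ℝ) * Δ := mul_le_mul (by exact_mod_cast hd1) hΔ5 (by norm_num) hd0.le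
  have hdΔ0 : 0 < (d:ℝ) * Δ := by linarith
  -- q^(gΔ) bound
  set C : ℝ := q ^ (g * Δ) with hC_def
  clear_value C
  have hCnn : 0 ≤ C := hC_def ▸ pow_nonneg hq0 _
  have hC : C ≤ δ * Real.exp (-4) := by
    have h1 : q ≤ Real.exp (-p) := by
      have := Real.add_one_le_exp (-p); simp [hq_def]; linarith
    have h2 : C ≤ Real.exp (-p) ^ (g * Δ) := hC_def ▸ pow_le_pow_left₀ hq0 h1 _
    have h3 : Real.exp (-p) ^ (g * Δ) = Real.exp (-((d:ℝ) * Δ)) := by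
      rw [← Real.exp_nat_mul]
      congr 1
      push_cast
      rw [← hpN, hNr_def]; ring
    have h4 : Real.exp (-((d:ℝ) * Δ)) ≤ Real.exp (-(Δ:ℝ)) := by
      apply Real.exp_le_exp.mpr
      have h1d : (1:ℝ) ≤ d := by exact_mod_cast hd1
      have : (Δ:ℝ) ≤ (d:ℝ) * Δ := by nlinarith [mul_nonneg (sub_nonneg.mpr h1d) (by linarith : (0:ℝ) ≤ (Δ:ℝ))]
      linarith
    have h5 : Real.exp (-(Δ:ℝ)) ≤ δ * Real.exp (-4) := by
      have : Real.log (1/δ) = -Real.log δ := by rw [one_div, Real.log_inv]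
      have hle : -(Δ:ℝ) ≤ Real.log δ + (-4) := by rw [this] at hΔlog; linarith
      calc Real.exp (-(Δ:ℝ)) ≤ Real.exp (Real.log δ + (-4)) := Real.exp_le_exp.mpr hle
      _ = δ * Real.exp (-4) := by rw [Real.exp_add, Real.exp_log hδ0]
    calc C ≤ _ := h2
    _ = _ := h3
    _ ≤ _ := h4
    _ ≤ _ := h5
  -- summability and geometric sums
  have hA : Summable (fun k : ℕ => (k:ℝ) * q ^ k) := by
    have := summable_pow_mul_geometric_of_norm_lt_one 1 hqnorm
    simpa using this
  have hB : Summable (fun k : ℕ => q ^ k) := summable_geometric_of_lt_one hq0 hq1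
  have htA : ∑' k : ℕ, (k:ℝ) * q ^ k = q / (1 - q) ^ 2 :=
    tsum_coe_mul_geometric_of_norm_lt_one hqnorm
  have htB : ∑' k : ℕ, q ^ k = (1 - q)⁻¹ := tsum_geometric_of_lt_one hq0 hq1
  have h1q : 1 - q = p := by rw [hq_def]; ring
  set F : ℕ → ℝ := fun k => ((k:ℝ) + 1) / Nr * q ^ k * p with hF_def
  clear_value F
  have hFeq : ∀ k, F k = ((k:ℝ) * q ^ k + q ^ k) * (p / Nr) := by
    intro k; simp only [hF_def]; ring
  have hF : Summable F := ((hA.add hB).mul_right (p / Nr)).congr (fun k => (hFeq k).symm)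
  have hFnn : ∀ k, 0 ≤ F k := by
    intro k
    simp only [hF_def]
    apply mul_nonneg (mul_nonneg (div_nonneg (by positivity) hNr0.le) (pow_nonneg hq0 _)) hp0.le
  have hTF : ∑' k, F k = 1 / ((d:ℝ) * Δ) := by
    rw [tsum_congr hFeq, tsum_mul_right, Summable.tsum_add hA hB, htA, htB, h1q, hq_def, ← hpN]
    field_simp
    ring
  -- the summand in the statement
  set Z : ℕ → ℝ := fun k =>
    (if k + 1 ≤ g * Δ then ((k:ℝ) + 1) / Nr else 0) * q ^ k * p with hZ_def
  clear_value Z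
  have hZnn : ∀ k, 0 ≤ Z k := by
    intro k
    simp only [hZ_def]
    apply mul_nonneg (mul_nonneg _ (pow_nonneg hq0 _)) hp0.le
    split
    · positivity
    · exact le_rfl
  -- Z ≤ F pointwise
  have hZle : ∀ k, Z k ≤ F k := by
    intro k
    simp only [hZ_def, hF_def]
    apply mul_le_mul_of_nonneg_right _ hp0.le
    apply mul_le_mul_of_nonneg_right _ (pow_nonneg hq0 _)
    split
    · exact le_rfl
    · positivity
  have hZsum : Summable Z := Summable.of_nonneg_of_le hZnn hZle hF
  -- Upper bound
  have hupper : tsum Z ≤ 1 / ((d:ℝ) * Δ) := by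
    rw [← hTF]; exact Summable.tsum_le_tsum hZle hZsum hF
  -- tsum Z as finite sum
  have hNrcast : ((g * Δ : ℕ) : ℝ) = Nr := by push_cast [hNr_def]; ring
  have hS : tsum Z = ∑ k ∈ Finset.range (g * Δ), F k := by
    rw [tsum_eq_sum (s := Finset.range (g * Δ))]
    · apply Finset.sum_congr rfl
      intro k hk
      rw [Finset.mem_range] at hk
      simp only [hZ_def, hF_def, if_pos (by omega : k + 1 ≤ g * Δ)]
    · intro k hk
      rw [Finset.mem_range] at hk
      simp only [hZ_def, if_neg (by omega : ¬ k + 1 ≤ g * Δ)]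
      ring
  -- tail
  set T : ℝ := ∑' i : ℕ, F (i + g * Δ) with hT_def
  clear_value T
  have hsplit : ∑ k ∈ Finset.range (g * Δ), F k + T = ∑' k, F k := by
    rw [hT_def]; exact Summable.sum_add_tsum_nat_add (g * Δ) hF
  -- compute the tail
  have hTeq : ∀ i : ℕ, F (i + g * Δ) = ((i:ℝ) * q ^ i + (Nr + 1) * q ^ i) * (p * C / Nr) := by
    intro i
    simp only [hF_def, hC_def, pow_add]
    push_cast [hNr_def]
    ring
  have hTval : T = (q / (1 - q) ^ 2 + (Nr + 1) * (1 - q)⁻¹) * (p * C / Nr) := by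
    rw [hT_def, tsum_congr hTeq, tsum_mul_right, Summable.tsum_add hA (hB.mul_left (Nr + 1)),
      htA, tsum_mul_left, htB]
  have hTbound : T ≤ δ := by
    have hrw : T = C * (q / (p * Nr)) + C * ((Nr + 1) / Nr) := by
      rw [hTval, h1q]
      field_simp
    have hb1 : q / (p * Nr) ≤ 1 / 5 := by
      rw [hpN]
      rw [div_le_div_iff₀ hdΔ0 (by norm_num)]
      nlinarith [hq1, hdΔ5]
      
    have hb2 : (Nr + 1) / Nr ≤ 6 / 5 := by
      rw [div_le_div_iff₀ hNr0 (by norm_num)]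
      linarith
    have hexp : Real.exp (-4) ≤ 1 / 5 := by
      have h5 : (5:ℝ) ≤ Real.exp 4 := by
        have := Real.add_one_le_exp (4:ℝ); linarith
      rw [Real.exp_neg]
      rw [inv_le_comm₀ (Real.exp_pos 4) (by norm_num)]
      linarith
    have hT75 : T ≤ C * (7 / 5) := by
      rw [hrw]
      have := mul_le_mul_of_nonneg_left hb1 hCnn
      have := mul_le_mul_of_nonneg_left hb2 hCnn
      linarith
    have hCd : C * (7 / 5) ≤ δ * Real.exp (-4) * (7 / 5) := by nlinarith
    have : δ * Real.exp (-4) * (7 / 5) ≤ δ := by nlinarith [Real.exp_pos (-4:ℝ)]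
    linarith
  refine ⟨?_, ?_, hupper⟩
  · intro k
    constructor
    · split
      · positivity
      · exact le_rfl
    · split
      · rename_i h
        rw [div_le_one hNr0]
        have : ((k:ℝ) + 1) ≤ ((g * Δ : ℕ) : ℝ) := by exact_mod_cast h
        rw [hNrcast] at this
        exact this
      · norm_num
  · have : tsum Z = 1 / ((d:ℝ) * Δ) - T := by rw [hS, ← hTF]; linarith
    rw [this]
    linarith
end

section
/- Let $Z$ be a standard normal random variable. Then for every $t \geq 0$, $\frac{1}{\sqrt{2\pi}} \cdot \frac{1}{t+1} e^{-t^2/2} \leq \Pr[Z \geq t] \leq \frac{1}{\sqrt{\pi}} \cdot \frac{1}{t+1} e^{-t^2/2}$. -/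
open MeasureTheory Set Filter Topology

noncomputable def swF (x : ℝ) : ℝ := Real.exp (-x ^ 2 / 2)

lemma swF_pos (x : ℝ) : 0 < swF x := Real.exp_pos _

lemma swF_cont : Continuous swF := by
  unfold swF; fun_prop

lemma swF_int : Integrable swF := by
  have h := integrable_exp_neg_mul_sq (by norm_num : (0:ℝ) < 1/2)
  refine h.congr (Filter.Eventually.of_forall fun x => ?_)
  unfold swF; ring_nf

noncomputable def swG (t : ℝ) : ℝ := ∫ x in Ioi t, swF x

lemma swG_eq (t : ℝ) : swG t = swG 0 - ∫ x in (0:ℝ)..t, swF x := by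
  have h1 := intervalIntegral.integral_Iic_sub_Iic (f := swF) (μ := volume)
    (swF_int.integrableOn) (swF_int.integrableOn) (a := 0) (b := t)
  have h2 : ∀ s : ℝ, (∫ x in Iic s, swF x) + swG s = ∫ x, swF x := fun s =>
    intervalIntegral.integral_Iic_add_Ioi (swF_int.integrableOn) (swF_int.integrableOn)
  linarith [h2 0, h2 t, h1]

lemma swG_hasDeriv (t : ℝ) : HasDerivAt swG (-swF t) t := by
  have h : HasDerivAt (fun u => ∫ x in (0:ℝ)..u, swF x) (swF t) t :=
    intervalIntegral.integral_hasDerivAt_right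
      (swF_cont.intervalIntegrable _ _)
      (swF_cont.stronglyMeasurableAtFilter _ _)
      swF_cont.continuousAt
  have h2 : HasDerivAt (fun u => swG 0 - ∫ x in (0:ℝ)..u, swF x) (0 - swF t) t :=
    (hasDerivAt_const t (swG 0)).sub h
  have hfun : swG = fun u => swG 0 - ∫ x in (0:ℝ)..u, swF x := funext swG_eq
  rw [hfun]
  simpa using h2

lemma swG_tendsto : Tendsto swG atTop (𝓝 0) := by
  have h : Tendsto (fun t => ∫ x in (0:ℝ)..t, swF x) atTop (𝓝 (swG 0)) :=
    intervalIntegral_tendsto_integral_Ioi 0 swF_int.integrableOn tendsto_id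
  have h2 := (tendsto_const_nhds (x := swG 0) (f := (atTop : Filter ℝ))).sub h
  simp only [sub_self] at h2
  exact h2.congr fun t => (swG_eq t).symm

lemma swRatio_tendsto : Tendsto (fun t : ℝ => swF t / (t + 1)) atTop (𝓝 0) := by
  have h1 : Tendsto swF atTop (𝓝 0) := by
    have h : Tendsto (fun t : ℝ => -t ^ 2 / 2) atTop atBot := by
      apply Tendsto.atBot_div_const (by norm_num)
      exact tendsto_neg_atTop_atBot.comp (tendsto_pow_atTop (by norm_num : 2 ≠ 0))
    exact Real.tendsto_exp_atBot.comp h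
  have h2 : Tendsto (fun t : ℝ => (t + 1)⁻¹) atTop (𝓝 0) :=
    Tendsto.inv_tendsto_atTop (tendsto_atTop_add_const_right _ 1 tendsto_id)
  have := h1.mul h2
  simpa [div_eq_mul_inv] using this

/-- derivative of `t ↦ swF t / (t+1)` for `t > -1`. -/
lemma swRatio_hasDeriv {t : ℝ} (ht : -1 < t) :
    HasDerivAt (fun u : ℝ => swF u / (u + 1))
      (swF t * (-(t ^ 2 + t + 1)) / (t + 1) ^ 2) t := by
  have ht0 : t + 1 ≠ 0 := by linarith
  have hF : HasDerivAt swF (swF t * (-t)) t := by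
    have h1 : HasDerivAt (fun u : ℝ => -u ^ 2 / 2) (-t) t := by
      have : HasDerivAt (fun u : ℝ => u ^ 2) (2 * t) t := by
        simpa using (hasDerivAt_pow 2 t)
      have := (this.neg).div_const 2
      refine this.congr_deriv ?_
      ring
    have := (Real.hasDerivAt_exp (-t ^ 2 / 2)).comp t h1
    exact this.congr_deriv (by unfold swF; ring)
  have hD : HasDerivAt (fun u : ℝ => u + 1) 1 t := by
    simpa using (hasDerivAt_id t).add_const 1
  have := hF.div hD ht0
  refine this.congr_deriv ?_
  field_simp
  ring

/-- The lower-bound auxiliary function is antitone on `[0, ∞)`. -/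
lemma swL_antitone : AntitoneOn (fun t : ℝ => swG t - swF t / (t + 1)) (Ici 0) := by
  have hderiv : ∀ t ∈ Ici (0:ℝ), HasDerivAt (fun u : ℝ => swG u - swF u / (u + 1))
      (swF t * (-t) / (t + 1) ^ 2) t := by
    intro t ht
    have ht' : -1 < t := by simp at ht; linarith
    have h := (swG_hasDeriv t).sub (swRatio_hasDeriv ht')
    refine h.congr_deriv ?_
    have ht0 : t + 1 ≠ 0 := by linarith
    field_simp
    ring
  have hcont : ContinuousOn (fun t : ℝ => swG t - swF t / (t + 1)) (Ici 0) := by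
    intro t ht
    exact ((hderiv t ht).continuousAt).continuousWithinAt
  refine antitoneOn_of_deriv_nonpos (convex_Ici 0) hcont ?_ ?_
  · intro t ht
    rw [interior_Ici] at ht
    exact ((hderiv t (mem_Ici.mpr (le_of_lt ht))).differentiableAt).differentiableWithinAt
  · intro t ht
    rw [interior_Ici] at ht
    rw [(hderiv t (mem_Ici.mpr (le_of_lt ht))).deriv]
    have h1 : 0 < t := ht
    have h2 : (0:ℝ) < (t + 1) ^ 2 := by positivity
    have h3 : swF t * (-t) ≤ 0 := by nlinarith [swF_pos t]
    exact div_nonpos_of_nonpos_of_nonneg h3 (le_of_lt h2)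

lemma sw_lower {t : ℝ} (ht : 0 ≤ t) : swF t / (t + 1) ≤ swG t := by
  have hlim : Tendsto (fun s : ℝ => swG s - swF s / (s + 1)) atTop (𝓝 0) := by
    have := swG_tendsto.sub swRatio_tendsto
    simpa using this
  have hge : ∀ᶠ s in atTop, swG s - swF s / (s + 1) ≤ swG t - swF t / (t + 1) := by
    filter_upwards [eventually_ge_atTop t] with s hs
    exact swL_antitone ht (le_trans ht hs) hs
  have := le_of_tendsto hlim hge
  linarith

/-- The upper-bound auxiliary function is antitone on `[0, ∞)`. -/
lemma swU_antitone :
    AntitoneOn (fun t : ℝ => Real.sqrt 2 * (swF t / (t + 1)) - swG t) (Ici 0) := by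
  have hderiv : ∀ t ∈ Ici (0:ℝ),
      HasDerivAt (fun u : ℝ => Real.sqrt 2 * (swF u / (u + 1)) - swG u)
      (Real.sqrt 2 * (swF t * (-(t ^ 2 + t + 1)) / (t + 1) ^ 2) - (-swF t)) t := by
    intro t ht
    have ht' : -1 < t := by simp at ht; linarith
    exact ((swRatio_hasDeriv ht').const_mul (Real.sqrt 2)).sub (swG_hasDeriv t)
  have hcont : ContinuousOn (fun t : ℝ => Real.sqrt 2 * (swF t / (t + 1)) - swG t) (Ici 0) :=
    fun t ht => ((hderiv t ht).continuousAt).continuousWithinAt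
  refine antitoneOn_of_deriv_nonpos (convex_Ici 0) hcont ?_ ?_
  · intro t ht
    rw [interior_Ici] at ht
    exact ((hderiv t (mem_Ici.mpr (le_of_lt ht))).differentiableAt).differentiableWithinAt
  · intro t ht
    rw [interior_Ici] at ht
    rw [(hderiv t (mem_Ici.mpr (le_of_lt ht))).deriv]
    have h1 : 0 < t := ht
    have h2 : (0:ℝ) < (t + 1) ^ 2 := by positivity
    have hs2 : Real.sqrt 2 ^ 2 = 2 := Real.sq_sqrt (by norm_num)
    have hs2' : (1.414 : ℝ) ≤ Real.sqrt 2 := by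
      nlinarith [Real.sqrt_nonneg 2, hs2]
    -- key inequality: (t+1)^2 ≤ √2 * (t^2 + t + 1)
    have hkey : (t + 1) ^ 2 ≤ Real.sqrt 2 * (t ^ 2 + t + 1) := by
      nlinarith [sq_nonneg (t - 1), h1.le]
    have hFpos := swF_pos t
    have hq : Real.sqrt 2 * (swF t * -(t ^ 2 + t + 1) / (t + 1) ^ 2) - -swF t
        = (Real.sqrt 2 * (swF t * -(t ^ 2 + t + 1)) + swF t * (t + 1) ^ 2) / (t + 1) ^ 2 := by
      field_simp
      ring
    rw [hq]
    apply div_nonpos_of_nonpos_of_nonneg _ h2.le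
    nlinarith

lemma sw_upper {t : ℝ} (ht : 0 ≤ t) : swG t ≤ Real.sqrt 2 * (swF t / (t + 1)) := by
  have hlim : Tendsto (fun s : ℝ => Real.sqrt 2 * (swF s / (s + 1)) - swG s) atTop (𝓝 0) := by
    have := (swRatio_tendsto.const_mul (Real.sqrt 2)).sub swG_tendsto
    simpa using this
  have hge : ∀ᶠ s in atTop,
      Real.sqrt 2 * (swF s / (s + 1)) - swG s
        ≤ Real.sqrt 2 * (swF t / (t + 1)) - swG t := by
    filter_upwards [eventually_ge_atTop t] with s hs
    exact swU_antitone ht (le_trans ht hs) hs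
  have := le_of_tendsto hlim hge
  linarith

lemma sw_measure_eq (t : ℝ) :
    ((ProbabilityTheory.gaussianReal 0 1) (Set.Ici t)).toReal
      = (Real.sqrt (2 * Real.pi))⁻¹ * swG t := by
  rw [ProbabilityTheory.gaussianReal_apply_eq_integral 0 one_ne_zero (Set.Ici t)]
  rw [ENNReal.toReal_ofReal (integral_nonneg fun x =>
    ProbabilityTheory.gaussianPDFReal_nonneg 0 1 x)]
  rw [MeasureTheory.integral_Ici_eq_integral_Ioi]
  unfold swG
  rw [← integral_const_mul]
  refine setIntegral_congr_fun measurableSet_Ioi fun x _ => ?_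
  unfold ProbabilityTheory.gaussianPDFReal
  push_cast
  rw [mul_one, sub_zero]
  unfold swF
  norm_num

open ProbabilityTheory Real in
/-- Szarek–Werner bounds on the standard normal tail: for every `t ≥ 0`,
`(1/√(2π)) e^{-t²/2}/(t+1) ≤ P[Z ≥ t] ≤ (1/√π) e^{-t²/2}/(t+1)`. -/
theorem stmt_11 (t : ℝ) (ht : 0 ≤ t) :
    (1 / Real.sqrt (2 * Real.pi)) * (1 / (t + 1)) * Real.exp (-t ^ 2 / 2)
      ≤ ((gaussianReal 0 1) (Set.Ici t)).toReal ∧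
    ((gaussianReal 0 1) (Set.Ici t)).toReal
      ≤ (1 / Real.sqrt Real.pi) * (1 / (t + 1)) * Real.exp (-t ^ 2 / 2) := by
  rw [sw_measure_eq]
  have hsqrt : 0 < Real.sqrt (2 * Real.pi) := Real.sqrt_pos.mpr (by positivity)
  have ht1 : (0:ℝ) < t + 1 := by linarith
  constructor
  · have h := sw_lower ht
    have h2 : (Real.sqrt (2 * Real.pi))⁻¹ * (swF t / (t + 1))
        ≤ (Real.sqrt (2 * Real.pi))⁻¹ * swG t :=
      mul_le_mul_of_nonneg_left h (by positivity)
    calc (1 / Real.sqrt (2 * Real.pi)) * (1 / (t + 1)) * Real.exp (-t ^ 2 / 2)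
        = (Real.sqrt (2 * Real.pi))⁻¹ * (swF t / (t + 1)) := by
          unfold swF; field_simp
      _ ≤ _ := h2
  · have h := sw_upper ht
    have h2 : (Real.sqrt (2 * Real.pi))⁻¹ * swG t
        ≤ (Real.sqrt (2 * Real.pi))⁻¹ * (Real.sqrt 2 * (swF t / (t + 1))) :=
      mul_le_mul_of_nonneg_left h (by positivity)
    refine h2.trans (le_of_eq ?_)
    have hsplit : Real.sqrt (2 * Real.pi) = Real.sqrt 2 * Real.sqrt Real.pi :=
      Real.sqrt_mul (by norm_num) _
    have hpi : 0 < Real.sqrt Real.pi := Real.sqrt_pos.mpr Real.pi_pos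
    have h2pos : (0:ℝ) < Real.sqrt 2 := Real.sqrt_pos.mpr (by norm_num)
    unfold swF
    rw [hsplit]
    field_simp
end
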